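/- arXiv:2411.06924 — 4 statements merged into one kernel-verified Lean document; each statement's English description precedes it below -/
import Mathlib

section
/- Let x > 0 be real, and consider allocations into n_s bundles with all bundle values in {x, x + 1/2, x + 1} and fixed total value S. If two such allocations have half-bundle counts n_h and m_h (numbers of bundles of value x + 1/2) with n_h > m_h, then the product of bundle values in the first allocation is strictly larger than in the second. -/
/-!
Equal bundle count and equal total value force the two allocations to differ by `k > 0` exchanges
of two bundles of value `x + 1/2` for one of value `x` and one of value `x + 1`.
Each exchange multiplies the product by `x (x + 1) / (x + 1/2) ^ 2 < 1`,
since `x (x + 1) = (x + 1/2) ^ 2 - 1/4`.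
-/

lemma mul_add_one_lt_add_half_sq (x : ℝ) : x * (x + 1) < (x + 1 / 2) ^ 2 := by
  nlinarith

lemma pow_mul_pow_lt_pow_two_mul {a b c : ℝ} (hac : 0 ≤ a * c) (h : a * c < b ^ 2) {k : ℕ}
    (hk : k ≠ 0) : a ^ k * c ^ k < b ^ (2 * k) := by
  rw [← mul_pow, mul_comm 2 k, pow_mul']
  exact pow_lt_pow_left₀ h hac hk

lemma exists_exchange_of_sum_eq {n₀ nh n₁ m₀ mh m₁ : ℕ} (hcount : n₀ + nh + n₁ = m₀ + mh + m₁)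
    (hweight : nh + 2 * n₁ = mh + 2 * m₁) (hgt : mh < nh) :
    ∃ k ≠ 0, nh = mh + 2 * k ∧ m₀ = n₀ + k ∧ m₁ = n₁ + k :=
  ⟨m₁ - n₁, by omega, by omega, by omega, by omega⟩

theorem stmt_4 (x : ℝ) (hx : x > 0) (ns : ℕ) (S : ℝ)
    (n₀ nh n₁ m₀ mh m₁ : ℕ)
    (hn : n₀ + nh + n₁ = ns)
    (hm : m₀ + mh + m₁ = ns)
    (hSn : (n₀ : ℝ) * x + (nh : ℝ) * (x + 1/2) + (n₁ : ℝ) * (x + 1) = S)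
    (hSm : (m₀ : ℝ) * x + (mh : ℝ) * (x + 1/2) + (m₁ : ℝ) * (x + 1) = S)
    (hgt : nh > mh) :
    x ^ n₀ * (x + 1/2) ^ nh * (x + 1) ^ n₁ >
      x ^ m₀ * (x + 1/2) ^ mh * (x + 1) ^ m₁ := by
  have hcount : n₀ + nh + n₁ = m₀ + mh + m₁ := hn.trans hm.symm
  have hcountℝ : (n₀ : ℝ) + nh + n₁ = m₀ + mh + m₁ := by exact_mod_cast hcount
  have hweightℝ : (nh : ℝ) + 2 * n₁ = mh + 2 * m₁ := by
    linear_combination 2 * hSn - 2 * hSm - 2 * x * hcountℝ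
  have hweight : nh + 2 * n₁ = mh + 2 * m₁ := by exact_mod_cast hweightℝ
  obtain ⟨k, hk, rfl, rfl, rfl⟩ := exists_exchange_of_sum_eq hcount hweight hgt
  have hexchange : x ^ k * (x + 1) ^ k < (x + 1 / 2) ^ (2 * k) :=
    pow_mul_pow_lt_pow_two_mul (by positivity) (mul_add_one_lt_add_half_sq x) hk
  calc x ^ (n₀ + k) * (x + 1/2) ^ mh * (x + 1) ^ (n₁ + k)
      = (x ^ n₀ * (x + 1/2) ^ mh * (x + 1) ^ n₁) * (x ^ k * (x + 1) ^ k) := by ring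
    _ < (x ^ n₀ * (x + 1/2) ^ mh * (x + 1) ^ n₁) * (x + 1/2) ^ (2 * k) := by gcongr
    _ = x ^ n₀ * (x + 1/2) ^ (mh + 2 * k) * (x + 1) ^ n₁ := by ring
end

section
/- Let s = p/2 with p an odd integer, p ≥ 3, and for a half-integer w let r(w) = max { r ∈ ℕ : w - s*r ∈ ℕ } (assuming the set is nonempty). Let x be a half-integer with r(x), r(x+1/2), r(x+1) defined. Then: (a) if x + 1 is an integer multiple of s, then r(x) = r(x+1/2) - 1 and r(x+1) = r(x+1/2) + 1; (b) if x + 1 is not an integer multiple of s and x + 1 > (r(x+1/2) + 1)*s, then r(x+1) = r(x) = r(x+1/2) + 1; (c) if x + 1 is not an integer multiple of s and x + 1 < (r(x+1/2) + 1)*s, then r(x+1) = r(x) = r(x+1/2) - 1. -/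
/-!
Write `s = t + 1/2` with `t ∈ ℕ`. Trading one heavy good for `t` light goods turns a bundle of
value `w + 1/2` into one of value `w`, so `r(w + 1/2) ≤ r(w) + 1`; and `r(w) ≠ r(w + 1/2)`,
since otherwise the two numbers of light goods would differ by `1/2`. Adding a light good gives
`r(x) ≤ r(x + 1)`, with equality unless an optimal bundle of value `x + 1` has no light good,
i.e. unless `x + 1` is a multiple of `s`. Finally `s r(w) ≤ w`, while `(r(x + 1/2) + 1) s ≤ x + 1`
makes `r(x + 1/2) + 1` heavy goods feasible for `x + 1`; these inequalities pin down all three values.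
-/

/-- `r` is the maximum number of heavy goods (each of value `s`) that a bundle
of total value `w` may contain, the rest being light goods of value 1. -/
def IsMaxHeavy (s w : ℝ) (r : ℕ) : Prop :=
  (∃ m : ℕ, w - s * r = (m : ℝ)) ∧
  ∀ r' : ℕ, (∃ m : ℕ, w - s * r' = (m : ℝ)) → r' ≤ r

namespace IsMaxHeavy

variable {s w : ℝ} {a b r : ℕ}

theorem le_of_sub_eq (h : IsMaxHeavy s w r) {c : ℕ} {n : ℤ} (hn : 0 ≤ n)
    (he : w - s * c = n) : c ≤ r :=
  h.2 c ⟨n.toNat, by rw [he]; exact_mod_cast (Int.toNat_of_nonneg hn).symm⟩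

theorem mul_le (h : IsMaxHeavy s w r) : s * r ≤ w := by
  obtain ⟨m, hm⟩ := h.1
  linarith [m.cast_nonneg (α := ℝ)]

theorem lt_of_lt_mul (h : IsMaxHeavy s w r) (hs : 0 < s) {c : ℕ} (hw : w < c * s) : r < c := by
  have : s * r < s * c := by linarith [h.mul_le]
  exact_mod_cast lt_of_mul_lt_mul_left this hs.le

theorem eq_of_eq_mul (h : IsMaxHeavy s w r) (hs : 0 < s) {k : ℤ} (hk : w = k * s) :
    (r : ℤ) = k := by
  have hrk : (r : ℤ) ≤ k := by
    have : s * r ≤ s * k := by linarith [h.mul_le]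
    exact_mod_cast le_of_mul_le_mul_left this hs
  have hk_le : k.toNat ≤ r := h.le_of_sub_eq le_rfl (by
    rw [hk, show ((k.toNat : ℕ) : ℝ) = k by exact_mod_cast Int.toNat_of_nonneg (by omega)]
    simp [mul_comm])
  omega

theorem le_of_add_one (h : IsMaxHeavy s w a) (h' : IsMaxHeavy s (w + 1) b) : a ≤ b := by
  obtain ⟨m, hm⟩ := h.1
  exact h'.le_of_sub_eq (n := m + 1) (by positivity) (by push_cast; linarith)

theorem le_of_add_one_of_not_mul (h : IsMaxHeavy s w a) (h' : IsMaxHeavy s (w + 1) b)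
    (hk : ¬ ∃ k : ℤ, w + 1 = k * s) : b ≤ a := by
  obtain ⟨m, hm⟩ := h'.1
  have hm0 : m ≠ 0 := by
    rintro rfl
    exact hk ⟨b, by push_cast at hm ⊢; linarith⟩
  exact h.le_of_sub_eq (n := m - 1) (by omega) (by push_cast; linarith)

theorem ne_of_add_half (h : IsMaxHeavy s w a) (h' : IsMaxHeavy s (w + 1 / 2) b) : a ≠ b := by
  rintro rfl
  obtain ⟨m, hm⟩ := h.1
  obtain ⟨n, hn⟩ := h'.1
  have : (2 * m + 1 : ℝ) = 2 * n := by linarith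
  exact_mod_cast (by omega : (2 * m + 1 : ℕ) ≠ 2 * n) (by exact_mod_cast this)

section HalfOdd

variable {t : ℕ}

theorem le_add_one_of_add_half (hs : s = t + 1 / 2) (h : IsMaxHeavy s w a)
    (h' : IsMaxHeavy s (w + 1 / 2) b) : b ≤ a + 1 := by
  obtain _ | c := b
  · omega
  obtain ⟨n, hn⟩ := h'.1
  have : c ≤ a := h.le_of_sub_eq (n := n + t) (by positivity) (by push_cast at hn ⊢; linarith)
  omega

theorem add_one_le_of_mul_le (hs : s = t + 1 / 2) (h : IsMaxHeavy s w a)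
    (h' : IsMaxHeavy s (w + 1 / 2) b) (hw : (a + 1) * s ≤ w + 1 / 2) : a + 1 ≤ b := by
  obtain ⟨m, hm⟩ := h.1
  have htm : t ≤ m := by exact_mod_cast (show (t : ℝ) ≤ m by linarith)
  exact h'.le_of_sub_eq (n := m - t) (by omega) (by push_cast; linarith)

end HalfOdd

end IsMaxHeavy

theorem stmt_6_general (p : ℤ) (hodd : Odd p) (hp : 3 ≤ p) (s : ℝ) (hs : s = (p : ℝ) / 2)
    (x : ℝ)
    (r0 rh r1 : ℕ)
    (h0 : IsMaxHeavy s x r0)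
    (hh : IsMaxHeavy s (x + 1/2) rh)
    (h1 : IsMaxHeavy s (x + 1) r1) :
    ((∃ k : ℤ, x + 1 = (k : ℝ) * s) →
        (r0 : ℤ) = (rh : ℤ) - 1 ∧ (r1 : ℤ) = (rh : ℤ) + 1) ∧
    ((¬ ∃ k : ℤ, x + 1 = (k : ℝ) * s) → x + 1 > ((rh : ℝ) + 1) * s →
        (r1 : ℤ) = (rh : ℤ) + 1 ∧ (r0 : ℤ) = (rh : ℤ) + 1) ∧
    ((¬ ∃ k : ℤ, x + 1 = (k : ℝ) * s) → x + 1 < ((rh : ℝ) + 1) * s →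
        (r1 : ℤ) = (rh : ℤ) - 1 ∧ (r0 : ℤ) = (rh : ℤ) - 1) := by
  obtain ⟨u, rfl⟩ := hodd
  have hst : s = u.toNat + 1 / 2 := by
    rw [hs, show ((u.toNat : ℕ) : ℝ) = u by exact_mod_cast Int.toNat_of_nonneg (by omega)]
    push_cast; ring
  have hs0 : 0 < s := by rw [hst]; positivity
  have h1' : IsMaxHeavy s (x + 1 / 2 + 1 / 2) r1 := by convert h1 using 1; ring
  have hrh_le := h0.le_add_one_of_add_half hst hh
  have hr1_le := hh.le_add_one_of_add_half hst h1'
  refine ⟨fun ⟨k, hk⟩ => ?_, fun hk hgt => ?_, fun hk hlt => ?_⟩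
  · have hr1 := h1.eq_of_eq_mul hs0 hk
    rw [← hr1] at hk
    push_cast at hk
    have hrh_lt : rh < r1 := hh.lt_of_lt_mul hs0 (by linarith)
    obtain rfl : r1 = rh + 1 := by omega
    have hr0_lt : r0 < rh + 1 := h0.lt_of_lt_mul hs0 (by push_cast at hk ⊢; linarith)
    have hne := h0.ne_of_add_half hh
    omega
  · have hr01 := h0.le_of_add_one h1
    have hr10 := h0.le_of_add_one_of_not_mul h1 hk
    have hrh_lt := hh.add_one_le_of_mul_le hst h1' (by linarith)
    omega
  · have hr01 := h0.le_of_add_one h1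
    have hr10 := h0.le_of_add_one_of_not_mul h1 hk
    have hr1_lt : r1 < rh + 1 := h1.lt_of_lt_mul hs0 (by push_cast; linarith)
    have hne := hh.ne_of_add_half h1'
    omega

theorem stmt_6 (p : ℤ) (hodd : Odd p) (hp : 3 ≤ p) (s : ℝ) (hs : s = (p : ℝ) / 2)
    (x : ℝ) (hx : ∃ q : ℤ, x = (q : ℝ) / 2)
    (r0 rh r1 : ℕ)
    (h0 : IsMaxHeavy s x r0)
    (hh : IsMaxHeavy s (x + 1/2) rh)
    (h1 : IsMaxHeavy s (x + 1) r1) :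
    ((∃ k : ℤ, x + 1 = (k : ℝ) * s) →
        (r0 : ℤ) = (rh : ℤ) - 1 ∧ (r1 : ℤ) = (rh : ℤ) + 1) ∧
    ((¬ ∃ k : ℤ, x + 1 = (k : ℝ) * s) → x + 1 > ((rh : ℝ) + 1) * s →
        (r1 : ℤ) = (rh : ℤ) + 1 ∧ (r0 : ℤ) = (rh : ℤ) + 1) ∧
    ((¬ ∃ k : ℤ, x + 1 = (k : ℝ) * s) → x + 1 < ((rh : ℝ) + 1) * s →
        (r1 : ℤ) = (rh : ℤ) - 1 ∧ (r0 : ℤ) = (rh : ℤ) - 1) :=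
  stmt_6_general p hodd hp s hs x r0 rh r1 h0 hh h1
end

section
/- Let s > 1 be a half-integer. Suppose agents i and j hold h_i and h_j heavy goods (each of value s) with h_i < h_j, together own ℓ light goods (value 1 each), and their bundle values w_i, w_j satisfy w_i ≠ w_j, where w_i + w_j = (h_i + h_j)*s + ℓ. After moving one heavy good from j to i (so i holds h_i + 1, j holds h_j - 1) and distributing the ℓ light goods greedily between them (repeatedly adding a light good to the currently lighter bundle), the resulting values w_i', w_j' satisfy w_i' * w_j' ≥ w_i * w_j. -/
/-!
Both distributions have the same total, so by `4xy = (x + y)² - (x - y)²` it suffices that the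
imbalance does not grow: `|wi' - wj'| ≤ |wi - wj|`. Each greedy step moves the imbalance one unit
towards 0 until it is at most 1, and changes it by an integer. Starting from the imbalance
`|hi - hj + 2| s ≤ (hj - hi) s` of the heavy goods, the final imbalance is therefore at most
`(hj - hi) s - ℓ ≤ wj - wi`, or at most 1 and congruent to `wi - wj` modulo ℤ. In the latter case
the half-integrality of `s` does the rest: a nonzero `D ∈ ½ℤ` with `|D| < 1` is `±½`, and the only
points of `½ + ℤ` in `[-1, 1]` are `±½`.
-/

/-- Greedy distribution of `n` light goods of value 1 between two bundles:
each good is added to the currently lighter bundle. -/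
noncomputable def greedy : ℕ → ℝ × ℝ → ℝ × ℝ
  | 0, p => p
  | n + 1, (a, b) => if a ≤ b then greedy n (a + 1, b) else greedy n (a, b + 1)

theorem greedy_fst_add_snd : ∀ (n : ℕ) (a b : ℝ),
    (greedy n (a, b)).1 + (greedy n (a, b)).2 = a + b + n
  | 0, a, b => by simp [greedy]
  | n + 1, a, b => by
    rw [greedy]
    split_ifs <;> rw [greedy_fst_add_snd n] <;> push_cast <;> ring

theorem exists_int_greedy_fst_sub_snd : ∀ (n : ℕ) (a b : ℝ),
    ∃ k : ℤ, (greedy n (a, b)).1 - (greedy n (a, b)).2 = a - b + k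
  | 0, a, b => ⟨0, by simp [greedy]⟩
  | n + 1, a, b => by
    rw [greedy]
    split_ifs
    · obtain ⟨k, hk⟩ := exists_int_greedy_fst_sub_snd n (a + 1) b
      exact ⟨k + 1, by rw [hk]; push_cast; ring⟩
    · obtain ⟨k, hk⟩ := exists_int_greedy_fst_sub_snd n a (b + 1)
      exact ⟨k - 1, by rw [hk]; push_cast; ring⟩

theorem abs_greedy_fst_sub_snd_le : ∀ (n : ℕ) (a b : ℝ),
    |(greedy n (a, b)).1 - (greedy n (a, b)).2| ≤ max (|a - b| - n) 1
  | 0, a, b => by simp [greedy]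
  | n + 1, a, b => by
    have hn : (0 : ℝ) ≤ n := n.cast_nonneg
    rw [greedy]
    split_ifs with hab
    · refine (abs_greedy_fst_sub_snd_le n (a + 1) b).trans (max_le ?_ (le_max_right _ _))
      rw [abs_of_nonpos (by linarith : a - b ≤ 0)]
      rcases abs_cases (a + 1 - b) with ⟨h, -⟩ | ⟨h, -⟩ <;> rw [h] <;> push_cast
      · exact le_max_of_le_right (by linarith)
      · exact le_max_of_le_left (by linarith)
    · refine (abs_greedy_fst_sub_snd_le n a (b + 1)).trans (max_le ?_ (le_max_right _ _))
      rw [abs_of_pos (by linarith : 0 < a - b)]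
      rcases abs_cases (a - (b + 1)) with ⟨h, -⟩ | ⟨h, -⟩ <;> rw [h] <;> push_cast
      · exact le_max_of_le_left (by linarith)
      · exact le_max_of_le_right (by linarith)

theorem mul_le_mul_of_add_eq_of_abs_sub_le {x y x' y' : ℝ} (hsum : x' + y' = x + y)
    (hdiff : |x' - y'| ≤ |x - y|) : x * y ≤ x' * y' := by
  have hsq : (x' - y') ^ 2 ≤ (x - y) ^ 2 := sq_le_sq.mpr (by simpa only [abs_abs] using hdiff)
  have hsum_sq : (x' + y') ^ 2 = (x + y) ^ 2 := by rw [hsum]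
  nlinarith

theorem abs_le_abs_of_half_int {D x : ℝ} (hD : ∃ q : ℤ, D = q / 2) (hD0 : D ≠ 0)
    (hx : ∃ k : ℤ, x = D + k) (hx1 : |x| ≤ 1) : |x| ≤ |D| := by
  obtain ⟨q, rfl⟩ := hD
  obtain ⟨k, rfl⟩ := hx
  have hq : q ≠ 0 := by rintro rfl; simp at hD0
  have hcast : (q : ℝ) / 2 + k = ((q + 2 * k : ℤ) : ℝ) / 2 := by push_cast; ring
  have hm : |q + 2 * k| ≤ 2 := by
    rw [hcast, abs_div, abs_two, div_le_iff₀ two_pos, one_mul, ← Int.cast_abs] at hx1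
    exact_mod_cast hx1
  rw [hcast, abs_div, abs_div, abs_two, div_le_div_iff_of_pos_right two_pos, ← Int.cast_abs,
    ← Int.cast_abs]
  -- if `|q| = 1` then `q + 2k` is odd, hence `|q + 2k| ≤ 1`
  have : |q + 2 * k| ≤ |q| := by
    rw [abs_le] at hm
    rcases abs_cases q with ⟨h, _⟩ | ⟨h, _⟩ <;> rw [h, abs_le] <;> omega
  exact_mod_cast this

theorem abs_greedy_fst_sub_snd_le_abs {n : ℕ} {a b D : ℝ} (hD : ∃ q : ℤ, D = q / 2)
    (hD0 : D ≠ 0) (hab : ∃ k : ℤ, a - b = D + k) (hn : |a - b| - n ≤ |D|) :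
    |(greedy n (a, b)).1 - (greedy n (a, b)).2| ≤ |D| := by
  have hdiff := abs_greedy_fst_sub_snd_le n a b
  rcases le_total (|a - b| - n) 1 with hsmall | hlarge
  · obtain ⟨k, hk⟩ := hab
    obtain ⟨k', hk'⟩ := exists_int_greedy_fst_sub_snd n a b
    exact abs_le_abs_of_half_int hD hD0 ⟨k + k', by rw [hk', hk]; push_cast; ring⟩
      (hdiff.trans (max_le hsmall le_rfl))
  · exact (hdiff.trans (max_eq_left hlarge).le).trans hn

theorem stmt_9 (s : ℝ) (hs1 : s > 1) (hs : ∃ p : ℤ, s = (p : ℝ) / 2)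
    (hi hj ℓi ℓj ℓ : ℕ) (hij : hi < hj) (hℓ : ℓi + ℓj = ℓ)
    (wi wj : ℝ) (hwi : wi = (hi : ℝ) * s + ℓi) (hwj : wj = (hj : ℝ) * s + ℓj)
    (hne : wi ≠ wj)
    (wi' wj' : ℝ)
    (hgreedy : (wi', wj') = greedy ℓ (((hi : ℝ) + 1) * s, ((hj : ℝ) - 1) * s)) :
    wi' * wj' ≥ wi * wj := by
  obtain ⟨rfl, rfl⟩ := Prod.ext_iff.mp hgreedy
  obtain ⟨p, hp⟩ := hs
  have hℓ' : (ℓi : ℝ) + ℓj = ℓ := by exact_mod_cast hℓ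
  have hij' : (hi : ℝ) + 1 ≤ hj := by exact_mod_cast hij
  refine mul_le_mul_of_add_eq_of_abs_sub_le ?_ ?_
  · rw [greedy_fst_add_snd, hwi, hwj]
    linarith
  refine abs_greedy_fst_sub_snd_le_abs ⟨(hi - hj) * p + 2 * (ℓi - ℓj), ?_⟩ (sub_ne_zero.mpr hne)
    ⟨p - ℓi + ℓj, ?_⟩ ?_
  · rw [hwi, hwj, hp]; push_cast; ring
  · rw [hwi, hwj, hp]; push_cast; ring
  have hab : |((hi : ℝ) + 1) * s - ((hj : ℝ) - 1) * s| ≤ ((hj : ℝ) - hi) * s :=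
    abs_le.mpr ⟨by nlinarith, by nlinarith⟩
  calc _ ≤ ((hj : ℝ) - hi) * s - ℓ := by linarith
    _ ≤ wj - wi := by rw [hwi, hwj]; linarith [(ℓj.cast_nonneg : (0 : ℝ) ≤ ℓj)]
    _ ≤ |wi - wj| := abs_sub_comm wj wi ▸ le_abs_self _
end

section
/- Let x > 0 and suppose among the bundles there are at least two of value x + 3/2 and at least one of value x. Then replacing two bundles of value x + 3/2 and one of value x by three bundles of value x + 1 preserves the number of bundles and the total value, and strictly increases the product of all bundle values. -/
/-! Three bundles of value `x + 1` beat two of value `x + 3/2` and one of value `x`, since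
`(x + 1)^3 - (x + 3/2)^2 * x = 3/4 * x + 1`; every other factor of the product is positive
and unchanged by the exchange. -/

theorem sq_add_three_halves_mul_lt_add_one_pow_three {x : ℝ} (hx : -4/3 < x) :
    (x + 3/2) ^ 2 * x < (x + 1) ^ 3 := by
  have gap : (x + 1) ^ 3 - (x + 3/2) ^ 2 * x = 3/4 * x + 1 := by ring
  linarith

theorem stmt_16 (x : ℝ) (hx : x > 0) (np n₀ n₁ : ℕ)
    (hnp : np ≥ 2) (hn₀ : n₀ ≥ 1) :
    (np - 2) + (n₀ - 1) + (n₁ + 3) = np + n₀ + n₁ ∧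
    ((np : ℝ) - 2) * (x + 3/2) + ((n₀ : ℝ) - 1) * x + ((n₁ : ℝ) + 3) * (x + 1) =
      (np : ℝ) * (x + 3/2) + (n₀ : ℝ) * x + (n₁ : ℝ) * (x + 1) ∧
    (x + 3/2) ^ (np - 2) * x ^ (n₀ - 1) * (x + 1) ^ (n₁ + 3) >
      (x + 3/2) ^ np * x ^ n₀ * (x + 1) ^ n₁ := by
  obtain ⟨k, rfl⟩ : ∃ k, np = k + 2 := ⟨np - 2, by omega⟩
  obtain ⟨m, rfl⟩ : ∃ m, n₀ = m + 1 := ⟨n₀ - 1, by omega⟩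
  refine ⟨by omega, by push_cast; ring, ?_⟩
  have rest_pos : 0 < (x + 3/2) ^ k * x ^ m * (x + 1) ^ n₁ := by positivity
  calc (x + 3/2) ^ (k + 2) * x ^ (m + 1) * (x + 1) ^ n₁
      = (x + 3/2) ^ 2 * x * ((x + 3/2) ^ k * x ^ m * (x + 1) ^ n₁) := by ring
    _ < (x + 1) ^ 3 * ((x + 3/2) ^ k * x ^ m * (x + 1) ^ n₁) :=
        mul_lt_mul_of_pos_right
          (sq_add_three_halves_mul_lt_add_one_pow_three (by linarith)) rest_pos
    _ = (x + 3/2) ^ k * x ^ m * (x + 1) ^ (n₁ + 3) := by ring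
end
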